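/- arXiv:2006.07715 — 9 statements merged into one kernel-verified Lean document; each statement's English description precedes it below -/
import Mathlib

section
/- Let X be a full additive subcategory of an abelian category A satisfying: (B1) X is generating; (B2) any A ∈ A with Hom_A(A, X) = 0 for all X ∈ X is zero. Then every morphism g in X that is an epimorphism in the category X (i.e. right-cancellable among morphisms of X) is an epimorphism in A. -/
open CategoryTheory CategoryTheory.Limits

universe w v u

variable {A : Type u} [Category.{v} A] [Abelian A]

/-- `k : a ⟶ b` is a weak kernel of `f : b ⟶ c` relative to the full subcategory `X`. -/
def IsWeakKernelIn (X : Set A) {a b c : A} (k : a ⟶ b) (f : b ⟶ c) : Prop :=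
  k ≫ f = 0 ∧ ∀ ⦃t : A⦄, t ∈ X → ∀ l : t ⟶ b, l ≫ f = 0 → ∃ m : t ⟶ a, m ≫ k = l

/-- `h : b ⟶ c` is a weak cokernel of `k : a ⟶ b` relative to the full subcategory `X`. -/
def IsWeakCokernelIn (X : Set A) {a b c : A} (h : b ⟶ c) (k : a ⟶ b) : Prop :=
  k ≫ h = 0 ∧ ∀ ⦃t : A⦄, t ∈ X → ∀ l : b ⟶ t, k ≫ l = 0 → ∃ m : c ⟶ t, h ≫ m = l

/-- `g : x ⟶ a` is a right `X`-approximation of `a`. -/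
def IsRightApprox (X : Set A) {x a : A} (g : x ⟶ a) : Prop :=
  x ∈ X ∧ ∀ ⦃t : A⦄, t ∈ X → ∀ h : t ⟶ a, ∃ k : t ⟶ x, k ≫ g = h

/-- `g : a ⟶ x` is a left `X`-approximation of `a`. -/
def IsLeftApprox (X : Set A) {a x : A} (g : a ⟶ x) : Prop :=
  x ∈ X ∧ ∀ ⦃t : A⦄, t ∈ X → ∀ h : a ⟶ t, ∃ k : x ⟶ t, g ≫ k = h

/-- `X` is a generating subcategory: every object is a quotient of an object of `X`. -/
def Generating (X : Set A) : Prop := ∀ a : A, ∃ x ∈ X, ∃ p : x ⟶ a, Epi p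

/-- `X` is a cogenerating subcategory: every object embeds into an object of `X`. -/
def Cogenerating (X : Set A) : Prop := ∀ a : A, ∃ x ∈ X, ∃ i : a ⟶ x, Mono i

/-- Every object admits a right `X`-approximation. -/
def ContravariantlyFinite (X : Set A) : Prop :=
  ∀ a : A, ∃ (x : A) (g : x ⟶ a), IsRightApprox X g

/-- Every object admits a left `X`-approximation. -/
def CovariantlyFinite (X : Set A) : Prop :=
  ∀ a : A, ∃ (x : A) (g : a ⟶ x), IsLeftApprox X g

/-- `X` is functorially finite. -/
def FunctoriallyFinite (X : Set A) : Prop :=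
  ContravariantlyFinite X ∧ CovariantlyFinite X

theorem hom_from_cokernel_eq_zero {C : Type*} [Category C] [HasZeroMorphisms C]
    {b c t : C} {g : b ⟶ c} [HasCokernel g]
    (hg : ∀ u v : c ⟶ t, g ≫ u = g ≫ v → u = v) (φ : cokernel g ⟶ t) : φ = 0 := by
  rw [← cancel_epi (cokernel.π g), comp_zero]
  exact hg _ _ (by rw [cokernel.condition_assoc, zero_comp, comp_zero])

theorem epi_of_epi_in_subcategory_general (X : Set A)
    (hB2 : ∀ a : A, (∀ x ∈ X, ∀ φ : a ⟶ x, φ = 0) → IsZero a)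
    {x1 x0 : A} (g : x1 ⟶ x0)
    (hepi : ∀ ⦃t : A⦄, t ∈ X → ∀ u v : x0 ⟶ t, g ≫ u = g ≫ v → u = v) :
    Epi g :=
  Abelian.epi_of_cokernel_π_eq_zero g <|
    (hB2 _ fun _ hx φ => hom_from_cokernel_eq_zero (hepi hx) φ).eq_of_tgt _ _

/-- If `X` is generating (B1) and every object with no nonzero morphism to `X` is zero
(B2), then any morphism of `X` which is an epimorphism in the category `X` is an
epimorphism in `A`. -/
theorem epi_of_epi_in_subcategory (X : Set A)
    (hB1 : Generating X)
    (hB2 : ∀ a : A, (∀ x ∈ X, ∀ φ : a ⟶ x, φ = 0) → IsZero a)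
    {x1 x0 : A} (h1 : x1 ∈ X) (h0 : x0 ∈ X) (g : x1 ⟶ x0)
    (hepi : ∀ ⦃t : A⦄, t ∈ X → ∀ u v : x0 ⟶ t, g ≫ u = g ≫ v → u = v) :
    Epi g :=
  epi_of_epi_in_subcategory_general X hB2 g hepi
end

section
/- Let X be an additive category with weak kernels in which every epimorphism is a weak cokernel. Let F be a finitely presented functor on X admitting a presentation X(-,X₁) → X(-,X₀) → F → 0 induced by an epimorphism f : X₁ → X₀ in X. Then for any other presentation X(-,X₁') → X(-,X₀') → F → 0 induced by a morphism f' : X₁' → X₀', the morphism f' is an epimorphism in X. -/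
open CategoryTheory CategoryTheory.Limits

universe v u

variable {C : Type u} [Category.{v} C] [Preadditive C] [HasFiniteBiproducts C]

/-- `f : A ⟶ B` is a weak kernel of `g : B ⟶ X` -/
def IsWeakKernel {A B X : C} (f : A ⟶ B) (g : B ⟶ X) : Prop :=
  f ≫ g = 0 ∧ ∀ ⦃T : C⦄ (l : T ⟶ B), l ≫ g = 0 → ∃ k : T ⟶ A, k ≫ f = l

/-- `h : B ⟶ X` is a weak cokernel of `f : A ⟶ B` -/
def IsWeakCokernel {A B X : C} (h : B ⟶ X) (f : A ⟶ B) : Prop :=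
  f ≫ h = 0 ∧ ∀ ⦃T : C⦄ (l : B ⟶ T), f ≫ l = 0 → ∃ k : X ⟶ T, h ≫ k = l

/-- `C` has weak kernels. -/
def HasWeakKernels : Prop :=
  ∀ ⦃a b : C⦄ (f : a ⟶ b), ∃ (c : C) (k : c ⟶ a), IsWeakKernel k f

/-- Every epimorphism of `C` is a weak cokernel. -/
def EpiIsWeakCokernel : Prop :=
  ∀ ⦃a b : C⦄ (f : a ⟶ b), Epi f → ∃ (c : C) (g : c ⟶ a), IsWeakCokernel f g

variable (C) in
/-- A functor `F : Cᵒᵖ ⥤ Ab` is finitely presented if it is the cokernel of a morphism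
between representable functors. -/
def IsFP (F : Cᵒᵖ ⥤ AddCommGrpCat.{v}) : Prop :=
  ∃ (X₁ X₀ : C) (f : X₁ ⟶ X₀) (p : preadditiveYoneda.obj X₀ ⟶ F)
    (w : preadditiveYoneda.map f ≫ p = 0),
    Nonempty (IsColimit (CokernelCofork.ofπ p w))

variable (C) in
/-- A functor `F : Cᵒᵖ ⥤ Ab` is effaceable if it admits a presentation induced by an
epimorphism of `C`. -/
def IsEff (F : Cᵒᵖ ⥤ AddCommGrpCat.{v}) : Prop :=
  ∃ (X₁ X₀ : C) (f : X₁ ⟶ X₀), Epi f ∧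
    ∃ (p : preadditiveYoneda.obj X₀ ⟶ F) (w : preadditiveYoneda.map f ≫ p = 0),
      Nonempty (IsColimit (CokernelCofork.ofπ p w))

/-!
Any two presentations of `F` can be compared: `p'` is surjective on elements, so by Yoneda
`p = y v ≫ p'` for some `v : X₀ ⟶ X₀'`, and likewise `p' = y u ≫ p`. Exactness of the second
presentation then gives `f ≫ v = r ≫ f'` and `u ≫ v - 𝟙 = s ≫ f'`. If `f' ≫ g = 0`, then
`f ≫ v ≫ g = 0`, so `v ≫ g = 0` because `f` is epi, and `g = u ≫ v ≫ g - s ≫ f' ≫ g = 0`.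
-/

section Presentation

open Opposite

variable {C : Type u} [Category.{v} C] [Preadditive C] {F : Cᵒᵖ ⥤ AddCommGrpCat.{v}}

lemma app_comp_eq_map_app {X₀ : C} (p : preadditiveYoneda.obj X₀ ⟶ F) {Y Z : C}
    (a : Y ⟶ Z) (b : Z ⟶ X₀) :
    p.app (op Y) (a ≫ b) = F.map a.op (p.app (op Z) b) :=
  NatTrans.naturality_apply p a.op b

variable {X₁ X₀ : C} {f : X₁ ⟶ X₀} {p : preadditiveYoneda.obj X₀ ⟶ F}

lemma app_comp_eq_zero (w : preadditiveYoneda.map f ≫ p = 0) {A : C} (t : A ⟶ X₁) :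
    p.app (op A) (t ≫ f) = 0 :=
  congrArg (fun φ => φ.app (op A) t) w

variable {w : preadditiveYoneda.map f ≫ p = 0} (h : IsColimit (CokernelCofork.ofπ p w))
include h

lemma surjective_app_of_isColimit (A : C) : Function.Surjective (p.app (op A)) := by
  have hA := CokernelCofork.mapIsColimit _ h ((evaluation Cᵒᵖ AddCommGrpCat.{v}).obj (op A))
  exact (AddCommGrpCat.epi_iff_surjective _).1 (epi_of_isColimit_cofork hA)

lemma exists_comp_eq_of_app_eq_zero {A : C} (l : A ⟶ X₀) (hl : p.app (op A) l = 0) :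
    ∃ t : A ⟶ X₁, t ≫ f = l := by
  let E := (evaluation Cᵒᵖ AddCommGrpCat.{v}).obj (op A)
  let S := ShortComplex.mk (E.map (preadditiveYoneda.map f)) (E.map p)
    (by rw [← E.map_comp, w, E.map_zero])
  exact S.ab_exact_iff.1 (S.exact_of_g_is_cokernel (CokernelCofork.mapIsColimit _ h E)) l hl

lemma exists_app_comp_eq_of_isColimit {X₀' : C} (p' : preadditiveYoneda.obj X₀' ⟶ F) :
    ∃ v : X₀' ⟶ X₀, ∀ {A : C} (a : A ⟶ X₀'), p.app (op A) (a ≫ v) = p'.app (op A) a := by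
  obtain ⟨v, hv⟩ := surjective_app_of_isColimit h X₀' (p'.app (op X₀') (𝟙 X₀'))
  refine ⟨(v : X₀' ⟶ X₀), fun {A} a => ?_⟩
  calc p.app (op A) (a ≫ v) = F.map a.op (p.app (op X₀') v) := app_comp_eq_map_app p a v
    _ = F.map a.op (p'.app (op X₀') (𝟙 X₀')) := congrArg _ hv
    _ = p'.app (op A) (a ≫ 𝟙 X₀') := (app_comp_eq_map_app p' a _).symm
    _ = p'.app (op A) a := congrArg _ (Category.comp_id a)

end Presentation

lemma epi_of_comparison_factors {C : Type u} [Category.{v} C] [Preadditive C]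
    {X₁ X₀ X₁' X₀' : C} (f : X₁ ⟶ X₀) [Epi f] (f' : X₁' ⟶ X₀') (v : X₀ ⟶ X₀') (u : X₀' ⟶ X₀)
    (hv : ∃ r : X₁ ⟶ X₁', r ≫ f' = f ≫ v) (huv : ∃ s : X₀' ⟶ X₁', s ≫ f' = u ≫ v - 𝟙 X₀') :
    Epi f' := by
  obtain ⟨r, hr⟩ := hv
  obtain ⟨s, hs⟩ := huv
  rw [Preadditive.epi_iff_cancel_zero]
  intro T g hg
  have hvg : v ≫ g = 0 := by
    rw [← cancel_epi f, ← Category.assoc, ← hr, Category.assoc, hg, comp_zero, comp_zero]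
  calc g = (u ≫ v) ≫ g - (u ≫ v - 𝟙 X₀') ≫ g := by simp
    _ = 0 := by rw [← hs, Category.assoc, Category.assoc, hvg, hg, comp_zero, comp_zero, sub_zero]

theorem epi_of_presentation_of_eff_general
    (F : Cᵒᵖ ⥤ AddCommGrpCat.{v})
    {X₁ X₀ : C} (f : X₁ ⟶ X₀) (hf : Epi f)
    (p : preadditiveYoneda.obj X₀ ⟶ F) (w : preadditiveYoneda.map f ≫ p = 0)
    (hp : Nonempty (IsColimit (CokernelCofork.ofπ p w)))
    {X₁' X₀' : C} (f' : X₁' ⟶ X₀')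
    (p' : preadditiveYoneda.obj X₀' ⟶ F) (w' : preadditiveYoneda.map f' ≫ p' = 0)
    (hp' : Nonempty (IsColimit (CokernelCofork.ofπ p' w'))) :
    Epi f' := by
  obtain ⟨h⟩ := hp
  obtain ⟨h'⟩ := hp'
  obtain ⟨v, hv⟩ := exists_app_comp_eq_of_isColimit h' p
  obtain ⟨u, hu⟩ := exists_app_comp_eq_of_isColimit h p'
  refine epi_of_comparison_factors f f' v u ?_ ?_
  · refine exists_comp_eq_of_app_eq_zero h' _ ?_
    simpa [hv] using app_comp_eq_zero w (𝟙 X₁)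
  · refine exists_comp_eq_of_app_eq_zero h' _ ?_
    have hu₀ : p.app _ u = p'.app _ (𝟙 X₀') := by simpa using hu (𝟙 X₀')
    exact (map_sub _ _ _).trans (sub_eq_zero.2 ((hv u).trans hu₀))

/-- If `F` admits a presentation induced by an epimorphism of `C`, then the morphism
inducing any other presentation of `F` is also an epimorphism. -/
theorem epi_of_presentation_of_eff
    (hwk : _root_.HasWeakKernels (C := C)) (hewc : EpiIsWeakCokernel (C := C))
    (F : Cᵒᵖ ⥤ AddCommGrpCat.{v})
    {X₁ X₀ : C} (f : X₁ ⟶ X₀) (hf : Epi f)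
    (p : preadditiveYoneda.obj X₀ ⟶ F) (w : preadditiveYoneda.map f ≫ p = 0)
    (hp : Nonempty (IsColimit (CokernelCofork.ofπ p w)))
    {X₁' X₀' : C} (f' : X₁' ⟶ X₀')
    (p' : preadditiveYoneda.obj X₀' ⟶ F) (w' : preadditiveYoneda.map f' ≫ p' = 0)
    (hp' : Nonempty (IsColimit (CokernelCofork.ofπ p' w'))) :
    Epi f' :=
  epi_of_presentation_of_eff_general F f hf p w hp f' p' w' hp'
end

section
/- Let X be an additive category with weak kernels in which every epimorphism is a weak cokernel. Let eff X denote the full subcategory of mod X consisting of functors F admitting a presentation X(-,X₁) → X(-,X₀) → F → 0 with X₁ → X₀ an epimorphism in X. Then F ∈ eff X if and only if Hom(F, X(-,X)) = 0 for all X ∈ X. -/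
open CategoryTheory CategoryTheory.Limits

universe v u

variable {C : Type u} [Category.{v} C] [Preadditive C] [HasFiniteBiproducts C]

/-!
By Yoneda, a morphism from the cokernel `F` of `X(-, f) : X(-, X₁) ⟶ X(-, X₀)` to a
representable functor `X(-, X)` is the same as a morphism `g : X₀ ⟶ X` with `f ≫ g = 0`.
Hence `Hom(F, X(-, X)) = 0` for all `X` says precisely that `f` is right-cancellable,
whatever presentation of `F` is chosen.
-/

section

variable {C : Type u} [Category.{v} C] [Preadditive C]

lemma epi_iff_forall_hom_to_preadditiveYoneda_eq_zero {X₁ X₀ : C} {f : X₁ ⟶ X₀}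
    {F : Cᵒᵖ ⥤ AddCommGrpCat.{v}} {p : preadditiveYoneda.obj X₀ ⟶ F}
    {w : preadditiveYoneda.map f ≫ p = 0} (hp : IsColimit (CokernelCofork.ofπ p w)) :
    Epi f ↔ ∀ (X : C) (φ : F ⟶ preadditiveYoneda.obj X), φ = 0 := by
  rw [Preadditive.epi_iff_cancel_zero]
  constructor
  · intro hf X φ
    have : Epi p := Cofork.IsColimit.epi hp
    obtain ⟨g, hg⟩ := preadditiveYoneda.map_surjective (p ≫ φ)
    have hfg : f ≫ g = 0 := by
      rw [← preadditiveYoneda.map_eq_zero_iff, Functor.map_comp, hg, ← Category.assoc, w,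
        zero_comp]
    rw [← cancel_epi p, comp_zero, ← hg, hf X g hfg, Functor.map_zero]
  · intro hzero X g hfg
    have wg : preadditiveYoneda.map f ≫ preadditiveYoneda.map g = 0 := by
      rw [← Functor.map_comp, hfg, Functor.map_zero]
    obtain ⟨φ, hφ⟩ := CokernelCofork.IsColimit.desc' hp _ wg
    rw [← preadditiveYoneda.map_eq_zero_iff, ← hφ, hzero X φ, comp_zero]

end

theorem isEff_iff_hom_to_representable_zero_general
    (F : Cᵒᵖ ⥤ AddCommGrpCat.{v}) (hF : IsFP C F) :
    IsEff C F ↔ ∀ (X : C) (φ : F ⟶ preadditiveYoneda.obj X), φ = 0 := by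
  constructor
  · rintro ⟨X₁, X₀, f, hf, p, w, ⟨hp⟩⟩
    exact (epi_iff_forall_hom_to_preadditiveYoneda_eq_zero hp).mp hf
  · intro hzero
    obtain ⟨X₁, X₀, f, p, w, ⟨hp⟩⟩ := hF
    exact ⟨X₁, X₀, f, (epi_iff_forall_hom_to_preadditiveYoneda_eq_zero hp).mpr hzero, p, w, ⟨hp⟩⟩

/-- A finitely presented functor is effaceable if and only if it admits no nonzero
morphism to a representable functor. -/
theorem isEff_iff_hom_to_representable_zero
    (hwk : _root_.HasWeakKernels (C := C)) (hewc : EpiIsWeakCokernel (C := C))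
    (F : Cᵒᵖ ⥤ AddCommGrpCat.{v}) (hF : IsFP C F) :
    IsEff C F ↔ ∀ (X : C) (φ : F ⟶ preadditiveYoneda.obj X), φ = 0 :=
  isEff_iff_hom_to_representable_zero_general F hF
end

section
/- Let X be an additive category with weak kernels in which every epimorphism is a weak cokernel, and let F ∈ eff X (i.e. F is a finitely presented functor admitting a presentation by an epimorphism of X). Then Ext¹_{mod X}(F, X(-,X)) = 0 for all X ∈ X. -/
open CategoryTheory CategoryTheory.Limits

universe v u

variable {C : Type u} [Category.{v} C] [Preadditive C] [HasFiniteBiproducts C]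

/-!
Lift the presentation `X(-,X₀) ⟶ F` along `p` to `q : X(-,X₀) ⟶ E`; this is possible because
`E`, being finitely presented, is additive, and representables are projective among additive
functors. By exactness, `X(-,f) ≫ q` factors through `i` as `X(-,g)`. Choosing `c` with `f` a
weak cokernel of `c`, the monomorphism `i` forces `c ≫ g = 0`, so `g = f ≫ h`. Then
`q - X(-,h) ≫ i` vanishes on `X(-,f)` and descends to a section of `p`, which splits the sequence.
-/

open Opposite

lemma Functor.additive_of_epi {D : Type*} [Category D] [Preadditive D]
    {G E : D ⥤ AddCommGrpCat.{v}} [G.Additive] (c : G ⟶ E) [Epi c] : E.Additive where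
  map_add {A B g g'} := by
    ext y
    obtain ⟨x, rfl⟩ := (AddCommGrpCat.epi_iff_surjective (c.app A)).1 inferInstance y
    simp only [AddCommGrpCat.hom_add_apply, ← NatTrans.naturality_apply, Functor.map_add, map_add]

section

variable {D : Type*} [Category.{v} D] [Preadditive D]

def preadditiveYonedaHomMk (E : Dᵒᵖ ⥤ AddCommGrpCat.{v}) [E.Additive] {Y : D}
    (e : E.obj (op Y)) : preadditiveYoneda.obj Y ⟶ E where
  app Z := AddCommGrpCat.ofHom
    (AddMonoidHom.mk' (fun g : Z.unop ⟶ Y ↦ E.map g.op e) fun g g' ↦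
      ConcreteCategory.congr_hom
        ((congrArg E.map (op_add D (g : Z.unop ⟶ Y) g')).trans E.map_add) e)
  naturality Z Z' h := by
    ext (g : Z.unop ⟶ Y)
    change E.map (h.unop ≫ g).op e = E.map h (E.map g.op e)
    rw [op_comp, Quiver.Hom.op_unop, Functor.map_comp, ConcreteCategory.comp_apply]

lemma exists_preadditiveYoneda_lift_of_epi {E F : Dᵒᵖ ⥤ AddCommGrpCat.{v}} [E.Additive]
    (p : E ⟶ F) [Epi p] {Y : D} (π : preadditiveYoneda.obj Y ⟶ F) :
    ∃ q : preadditiveYoneda.obj Y ⟶ E, q ≫ p = π := by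
  obtain ⟨e, he⟩ := (AddCommGrpCat.epi_iff_surjective (p.app (op Y))).1 inferInstance
    (π.app (op Y) (𝟙 Y))
  refine ⟨preadditiveYonedaHomMk E e, ?_⟩
  ext Z (g : Z.unop ⟶ Y)
  calc p.app Z (E.map g.op e) = F.map g.op (p.app _ e) := NatTrans.naturality_apply _ _ _
    _ = π.app Z (g ≫ 𝟙 Y) := by rw [he]; exact (NatTrans.naturality_apply π g.op (𝟙 Y)).symm
    _ = π.app Z g := by rw [Category.comp_id]

lemma IsFP.additive {E : Dᵒᵖ ⥤ AddCommGrpCat.{v}} (hE : IsFP D E) : E.Additive := by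
  obtain ⟨_, _, _, c, _, ⟨hc⟩⟩ := hE
  have : Epi c := epi_of_isColimit_cofork hc
  exact Functor.additive_of_epi c

lemma IsWeakCokernel.exists_comp_eq_of_preadditiveYoneda {X₂ X₁ X₀ X : D} {c : X₂ ⟶ X₁}
    {f : X₁ ⟶ X₀} (hf : IsWeakCokernel f c) {E : Dᵒᵖ ⥤ AddCommGrpCat.{v}}
    {i : preadditiveYoneda.obj X ⟶ E} [Mono i] {g : X₁ ⟶ X} {q : preadditiveYoneda.obj X₀ ⟶ E}
    (hgq : preadditiveYoneda.map g ≫ i = preadditiveYoneda.map f ≫ q) : ∃ h : X₀ ⟶ X, f ≫ h = g :=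
  hf.2 g <| preadditiveYoneda.map_injective <| by
    rw [← cancel_mono i, Functor.map_comp, Category.assoc, hgq, ← Category.assoc,
      ← Functor.map_comp, hf.1, Functor.map_zero, Functor.map_zero, zero_comp, zero_comp]

end

theorem ext_one_vanishes_of_eff_general
    (hewc : EpiIsWeakCokernel (C := C))
    (F : Cᵒᵖ ⥤ AddCommGrpCat.{v}) (hF : IsEff C F) (X : C)
    (E : Cᵒᵖ ⥤ AddCommGrpCat.{v}) (hE : IsFP C E)
    (i : preadditiveYoneda.obj X ⟶ E) (p : E ⟶ F) (w : i ≫ p = 0)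
    (hi : Mono i) (hp : Epi p) (hex : (ShortComplex.mk i p w).Exact) :
    ∃ r : E ⟶ preadditiveYoneda.obj X, i ≫ r = 𝟙 _ := by
  obtain ⟨X₁, X₀, f, hf, π, hfπ, ⟨hπ⟩⟩ := hF
  obtain ⟨X₂, c, hfc⟩ := hewc f hf
  have := hE.additive
  obtain ⟨q, hqp⟩ := exists_preadditiveYoneda_lift_of_epi p π
  obtain ⟨g', hg'⟩ := hex.lift' (preadditiveYoneda.map f ≫ q) <| by
    simp only [Category.assoc, hqp, hfπ]
  obtain ⟨g, rfl⟩ := preadditiveYoneda.map_surjective g'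
  obtain ⟨h, rfl⟩ := hfc.exists_comp_eq_of_preadditiveYoneda hg'
  obtain ⟨t, hπt : π ≫ t = q - preadditiveYoneda.map h ≫ i⟩ :=
    CokernelCofork.IsColimit.desc' hπ (q - preadditiveYoneda.map h ≫ i) <| by
      rw [Preadditive.comp_sub, ← Category.assoc, ← Functor.map_comp]
      exact sub_eq_zero.2 hg'.symm
  have htp : t ≫ p = 𝟙 F := by
    have : Epi π := epi_of_isColimit_cofork hπ
    rw [← cancel_epi π, ← Category.assoc, hπt, Preadditive.sub_comp, Category.assoc, w,
      comp_zero, sub_zero, hqp, Category.comp_id]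
  let s := ShortComplex.Splitting.ofExactOfSection _ hex t htp hi
  exact ⟨s.r, s.f_r⟩

/-- If `F` is effaceable, then `Ext¹(F, X(-,X)) = 0` in `mod C`: every short exact
sequence `0 ⟶ X(-,X) ⟶ E ⟶ F ⟶ 0` of finitely presented functors splits. -/
theorem ext_one_vanishes_of_eff
    (hwk : _root_.HasWeakKernels (C := C)) (hewc : EpiIsWeakCokernel (C := C))
    (F : Cᵒᵖ ⥤ AddCommGrpCat.{v}) (hF : IsEff C F) (X : C)
    (E : Cᵒᵖ ⥤ AddCommGrpCat.{v}) (hE : IsFP C E)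
    (i : preadditiveYoneda.obj X ⟶ E) (p : E ⟶ F) (w : i ≫ p = 0)
    (hi : Mono i) (hp : Epi p) (hex : (ShortComplex.mk i p w).Exact) :
    ∃ r : E ⟶ preadditiveYoneda.obj X, i ≫ r = 𝟙 _ :=
  ext_one_vanishes_of_eff_general hewc F hF X E hE i p w hi hp hex
end

section
/- Let X be an additive category with weak kernels in which every epimorphism is a weak cokernel. Then the full subcategory eff X of mod X, consisting of finitely presented functors admitting a presentation induced by an epimorphism of X, is a Serre subcategory of the abelian category mod X: for every short exact sequence 0 → F₁ → F₂ → F₃ → 0 in mod X, F₂ ∈ eff X if and only if F₁ ∈ eff X and F₃ ∈ eff X. -/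
open CategoryTheory CategoryTheory.Limits

universe v u

variable {C : Type u} [Category.{v} C] [Preadditive C] [HasFiniteBiproducts C]

/-!
For finitely presented `F`, being in `eff C` amounts to every element `x ∈ F(X)` being killed
by some epimorphism `Y ⟶ X`. Given a presentation by an epimorphism `f : X₁ ⟶ X₀` and a preimage
`h : X ⟶ X₀` of `x`, a weak pullback of `f` along `h` kills `x`, and its leg into `X` is epi since
`f` is a weak cokernel of its weak kernel. Conversely, an epimorphism `g` killing the universal
element of `F(X₀)` can be added to any presentation `f`, giving the epimorphism `[f g]`. The
elementwise condition passes to subobjects, quotients and extensions because exactness in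
`mod C` is checked objectwise.
-/

open Opposite

section EffacedByEpis

omit [Preadditive C] [HasFiniteBiproducts C]

def IsEffacedByEpis (F : Cᵒᵖ ⥤ AddCommGrpCat.{v}) : Prop :=
  ∀ ⦃X : C⦄ (x : F.obj (op X)), ∃ (Y : C) (g : Y ⟶ X), Epi g ∧ F.map g.op x = 0

namespace IsEffacedByEpis

variable {F₁ F₂ F₃ : Cᵒᵖ ⥤ AddCommGrpCat.{v}}

lemma of_mono (i : F₁ ⟶ F₂) [Mono i] (h : IsEffacedByEpis F₂) : IsEffacedByEpis F₁ := by
  intro X x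
  obtain ⟨Y, g, hg, hgx⟩ := h (i.app (op X) x)
  refine ⟨Y, g, hg, (AddCommGrpCat.mono_iff_injective (i.app (op Y))).1 inferInstance ?_⟩
  rw [NatTrans.naturality_apply, hgx, map_zero]

lemma of_epi (p : F₂ ⟶ F₃) [Epi p] (h : IsEffacedByEpis F₂) : IsEffacedByEpis F₃ := by
  intro X z
  obtain ⟨x, rfl⟩ := (AddCommGrpCat.epi_iff_surjective (p.app (op X))).1 inferInstance z
  obtain ⟨Y, g, hg, hgx⟩ := h x
  refine ⟨Y, g, hg, ?_⟩
  rw [← NatTrans.naturality_apply, hgx, map_zero]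

lemma of_exact {S : ShortComplex (Cᵒᵖ ⥤ AddCommGrpCat.{v})} (hS : S.Exact)
    (h₁ : IsEffacedByEpis S.X₁) (h₃ : IsEffacedByEpis S.X₃) : IsEffacedByEpis S.X₂ := by
  intro X x
  obtain ⟨Y, g, hg, hgx⟩ := h₃ (S.g.app (op X) x)
  have hexact : ∀ x₂ : S.X₂.obj (op Y), S.g.app (op Y) x₂ = 0 → ∃ x₁, S.f.app (op Y) x₁ = x₂ :=
    (ShortComplex.ab_exact_iff _).1 (hS.map ((evaluation _ _).obj (op Y)))
  obtain ⟨x₁, hx₁⟩ := hexact (S.X₂.map g.op x) (by rw [NatTrans.naturality_apply, hgx])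
  obtain ⟨Y', g', hg', hg'x⟩ := h₁ x₁
  refine ⟨Y', g' ≫ g, epi_comp _ _, ?_⟩
  rw [op_comp, Functor.map_comp, ConcreteCategory.comp_apply, ← hx₁, ← NatTrans.naturality_apply,
    hg'x, map_zero]

end IsEffacedByEpis

lemma ShortComplex.ShortExact.isEffacedByEpis_iff
    {S : ShortComplex (Cᵒᵖ ⥤ AddCommGrpCat.{v})} (hS : S.ShortExact) :
    IsEffacedByEpis S.X₂ ↔ IsEffacedByEpis S.X₁ ∧ IsEffacedByEpis S.X₃ :=
  have := hS.mono_f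
  have := hS.epi_g
  ⟨fun h ↦ ⟨h.of_mono S.f, h.of_epi S.g⟩, fun h ↦ h.1.of_exact hS.exact h.2⟩

end EffacedByEpis

section

omit [HasFiniteBiproducts C]

lemma preadditiveYoneda_obj_app_comp {X₀ Y Z : C} {F : Cᵒᵖ ⥤ AddCommGrpCat.{v}}
    (p : preadditiveYoneda.obj X₀ ⟶ F) (m : Z ⟶ Y) (g : Y ⟶ X₀) :
    p.app (op Z) (m ≫ g) = F.map m.op (p.app (op Y) g) :=
  NatTrans.naturality_apply p m.op g

lemma preadditiveYoneda_map_comp_eq_zero_iff {X₀ Y : C} {F : Cᵒᵖ ⥤ AddCommGrpCat.{v}}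
    (p : preadditiveYoneda.obj X₀ ⟶ F) (u : Y ⟶ X₀) :
    preadditiveYoneda.map u ≫ p = 0 ↔ p.app (op Y) u = 0 := by
  constructor
  · intro h
    have h' : p.app (op Y) (𝟙 Y ≫ u) = 0 := ConcreteCategory.congr_hom (congr_app h (op Y)) (𝟙 Y)
    rwa [Category.id_comp] at h'
  · intro h
    ext Z m
    change p.app Z (m ≫ u) = 0
    rw [preadditiveYoneda_obj_app_comp p m u, h, map_zero]

lemma preadditiveYoneda_obj_app_add {X₀ Y : C} {F : Cᵒᵖ ⥤ AddCommGrpCat.{v}}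
    (p : preadditiveYoneda.obj X₀ ⟶ F) (g₁ g₂ : Y ⟶ X₀) :
    p.app (op Y) (g₁ + g₂) = p.app (op Y) g₁ + p.app (op Y) g₂ :=
  map_add (p.app (op Y)).hom g₁ g₂

lemma IsWeakCokernel.of_isWeakKernel {A B X K : C} {u : B ⟶ X} {c : A ⟶ B} {k : K ⟶ B}
    (hu : IsWeakCokernel u c) (hk : IsWeakKernel k u) : IsWeakCokernel u k := by
  refine ⟨hk.1, fun T l hl ↦ hu.2 l ?_⟩
  obtain ⟨s, rfl⟩ := hk.2 c hu.1
  rw [Category.assoc, hl, comp_zero]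

lemma IsWeakKernel.epi_comp_biprod_snd [HasBinaryBiproducts C] (hewc : EpiIsWeakCokernel (C := C))
    {X₁ X₀ X W : C} {f : X₁ ⟶ X₀} [Epi f] {h : X ⟶ X₀} {k : W ⟶ X₁ ⊞ X}
    (hk : IsWeakKernel k (biprod.desc f (-h))) : Epi (k ≫ biprod.snd) := by
  obtain ⟨Z, c, hc⟩ := hewc (biprod.desc f (-h)) inferInstance
  have hu := hc.of_isWeakKernel hk
  refine Preadditive.epi_of_cancel_zero _ fun l hl ↦ ?_
  obtain ⟨m, hm⟩ := hu.2 (biprod.snd ≫ l) (by rwa [← Category.assoc])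
  have hm0 : m = 0 := zero_of_epi_comp f (by simpa using biprod.inl ≫= hm)
  simpa [hm0] using (biprod.inr ≫= hm).symm

lemma IsEff.isEffacedByEpis [HasBinaryBiproducts C] (hwk : _root_.HasWeakKernels (C := C))
    (hewc : EpiIsWeakCokernel (C := C)) {F : Cᵒᵖ ⥤ AddCommGrpCat.{v}} (hF : IsEff C F) :
    IsEffacedByEpis F := by
  obtain ⟨X₁, X₀, f, hf, p, w, ⟨hc⟩⟩ := hF
  intro X x
  have : Epi p := epi_of_isColimit_cofork hc
  obtain ⟨(h : X ⟶ X₀), rfl⟩ := (AddCommGrpCat.epi_iff_surjective (p.app (op X))).1 inferInstance x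
  obtain ⟨W, k, hk⟩ := hwk (biprod.desc f (-h))
  refine ⟨W, k ≫ biprod.snd, hk.epi_comp_biprod_snd hewc, ?_⟩
  have hsquare : (k ≫ biprod.snd) ≫ h = (k ≫ biprod.fst) ≫ f := by
    refine (sub_eq_zero.1 ?_).symm
    simpa [biprod.desc_eq, sub_eq_add_neg] using hk.1
  rw [← preadditiveYoneda_obj_app_comp, hsquare, preadditiveYoneda_obj_app_comp,
    (preadditiveYoneda_map_comp_eq_zero_iff p f).1 w, map_zero]

lemma IsFP.isEff_of_isEffacedByEpis [HasBinaryBiproducts C] {F : Cᵒᵖ ⥤ AddCommGrpCat.{v}}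
    (hF : IsFP C F) (h : IsEffacedByEpis F) : IsEff C F := by
  obtain ⟨X₁, X₀, f, p, w, ⟨hc⟩⟩ := hF
  obtain ⟨Y, g, hg, hgx⟩ := h (p.app (op X₀) (𝟙 X₀))
  have hpg : p.app (op Y) g = 0 := by
    rw [← Category.comp_id g, preadditiveYoneda_obj_app_comp, hgx]
  have hw : preadditiveYoneda.map (biprod.desc f g) ≫ p = 0 := by
    rw [preadditiveYoneda_map_comp_eq_zero_iff, biprod.desc_eq, preadditiveYoneda_obj_app_add,
      preadditiveYoneda_obj_app_comp, preadditiveYoneda_obj_app_comp,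
      (preadditiveYoneda_map_comp_eq_zero_iff p f).1 w, hpg, map_zero, map_zero, add_zero]
  refine ⟨X₁ ⊞ Y, X₀, biprod.desc f g, inferInstance, p, hw,
    ⟨isCokernelOfComp (preadditiveYoneda.map biprod.inl) _ hc hw ?_⟩⟩
  rw [← Functor.map_comp, biprod.inl_desc]

end

/-- `eff C` is a Serre subcategory of `mod C`: for any short exact sequence
`0 ⟶ F₁ ⟶ F₂ ⟶ F₃ ⟶ 0` of finitely presented functors, the middle term is
effaceable iff the outer terms are. -/
theorem eff_serre_subcategory
    (hwk : _root_.HasWeakKernels (C := C)) (hewc : EpiIsWeakCokernel (C := C))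
    (F₁ F₂ F₃ : Cᵒᵖ ⥤ AddCommGrpCat.{v})
    (h₁ : IsFP C F₁) (h₂ : IsFP C F₂) (h₃ : IsFP C F₃)
    (i : F₁ ⟶ F₂) (p : F₂ ⟶ F₃) (w : i ≫ p = 0)
    (hi : Mono i) (hp : Epi p) (hex : (ShortComplex.mk i p w).Exact) :
    IsEff C F₂ ↔ IsEff C F₁ ∧ IsEff C F₃ := by
  have : HasBinaryBiproducts C := hasBinaryBiproducts_of_finite_biproducts C
  have isEff_iff {F : Cᵒᵖ ⥤ AddCommGrpCat.{v}} (hF : IsFP C F) : IsEff C F ↔ IsEffacedByEpis F :=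
    ⟨IsEff.isEffacedByEpis hwk hewc, hF.isEff_of_isEffacedByEpis⟩
  rw [isEff_iff h₁, isEff_iff h₂, isEff_iff h₃]
  exact ShortComplex.ShortExact.isEffacedByEpis_iff ⟨hex⟩
end

section
/- Let X be an additive category with weak kernels in which every epimorphism is a weak cokernel, and let q : mod X → (mod X)/(eff X) be the Serre quotient functor. Then for every finitely presented functor F and every X ∈ X, the map Hom_{mod X}(F, X(-,X)) → Hom_{(mod X)/(eff X)}(q(F), q(X(-,X))) induced by q is an isomorphism. In particular, the composite of the Yoneda embedding X → mod X with q is fully faithful. -/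
open CategoryTheory CategoryTheory.Limits

set_option linter.unusedSectionVars false

universe v u

variable {C : Type u} [Category.{v} C] [Preadditive C] [HasFiniteBiproducts C]

lemma preadditiveYoneda_map_zero {X Y : C} :
    preadditiveYoneda.map (0 : X ⟶ Y) = 0 := by
  ext Z g
  simp

lemma isFP_preadditiveYoneda (X : C) : IsFP C (preadditiveYoneda.obj X) :=
  ⟨X, X, 0, 𝟙 _, by rw [preadditiveYoneda_map_zero]; simp,
    ⟨CokernelCofork.IsColimit.ofId _ preadditiveYoneda_map_zero⟩⟩

variable (C) in
/-- The category `mod C` of finitely presented functors. -/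
abbrev ModCat := ObjectProperty.FullSubcategory (IsFP C)

variable (C) in
/-- The class of morphisms of `mod C` whose kernel and cokernel (computed in the ambient
functor category) are effaceable. -/
def effW : MorphismProperty (ModCat C) := fun F G φ =>
  IsEff C (kernel (show F.obj ⟶ G.obj from φ.hom)) ∧
    IsEff C (cokernel (show F.obj ⟶ G.obj from φ.hom))

variable (C) in
/-- The Yoneda embedding `C ⥤ mod C`. -/
def yonedaMod : C ⥤ ModCat C :=
  ObjectProperty.lift _ preadditiveYoneda isFP_preadditiveYoneda

/-!
The representable `X(-, X)` is local for `effW`: precomposition with a morphism of `mod C` whose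
kernel and cokernel are effaceable is bijective on morphisms into it. That suffices, because the
localization functor is bijective on morphisms into any `W`-local object (checked on the generators
`Q f` and `(Q w)⁻¹` of the localized category).

Locality rests on two facts about an effaceable `E` presented by an epimorphism `f : X₁ ⟶ X₀`.
First, a morphism `E ⟶ X(-, X)` comes from some `g` with `f ≫ g = 0`, so it vanishes as `f` is
epi. Second, an extension `0 ⟶ X(-, X) ⟶ P ⟶ E ⟶ 0` through which `X(-, X₀) ⟶ E` lifts splits:
the lift can be corrected to kill `X(-, X₁)` because `f` is a weak cokernel. Extending a morphism
to `X(-, X)` along a mono with effaceable cokernel reduces to this splitting by a pushout.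
-/

lemma CategoryTheory.Localization.map_eq_of_map_eq {𝒞 𝒟 ℰ : Type*} [Category 𝒞] [Category 𝒟]
    [Category ℰ] (L : 𝒞 ⥤ 𝒟) (W : MorphismProperty 𝒞) [L.IsLocalization W] {F : 𝒞 ⥤ ℰ}
    (hF : W.IsInvertedBy F) {X Y : 𝒞} {f₁ f₂ : X ⟶ Y} (h : L.map f₁ = L.map f₂) :
    F.map f₁ = F.map f₂ := by
  rw [← NatIso.naturality_1 (fac F hF L), ← NatIso.naturality_1 (fac F hF L), Functor.comp_map,
    Functor.comp_map, h]

namespace CategoryTheory.MorphismProperty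

variable {𝒞 : Type*} [Category 𝒞] {W : MorphismProperty 𝒞} {Y : 𝒞}

lemma isLocal.isInvertedBy_yoneda_obj (hY : W.isLocal Y) : W.op.IsInvertedBy (yoneda.obj Y) :=
  fun _ _ w hw => (isIso_iff_bijective _).2 (hY w.unop hw)

lemma isLocal.Q_map_injective (hY : W.isLocal Y) (X : 𝒞) :
    Function.Injective (fun g : X ⟶ Y => W.Q.map g) := by
  intro g₁ g₂ hg
  have hmap : (yoneda.obj Y).map g₁.op = (yoneda.obj Y).map g₂.op :=
    Localization.map_eq_of_map_eq W.Q.op W.op hY.isInvertedBy_yoneda_obj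
      (congrArg Quiver.Hom.op hg)
  simpa using types_congr_hom hmap (𝟙 Y)

lemma isLocal.Q_map_surjective (hY : W.isLocal Y) (X : 𝒞) :
    Function.Surjective (fun g : X ⟶ Y => W.Q.map g) := by
  let P : MorphismProperty W.Localization := fun A B φ =>
    ∀ b : (Localization.Construction.objEquiv W).symm B ⟶ Y,
      ∃ a : (Localization.Construction.objEquiv W).symm A ⟶ Y, W.Q.map a = φ ≫ W.Q.map b
  have : P.IsStableUnderComposition := ⟨fun φ ψ hφ hψ b => by
    obtain ⟨a, ha⟩ := hψ b
    obtain ⟨a', ha'⟩ := hφ a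
    exact ⟨a', ha'.trans ((congrArg (φ ≫ ·) ha).trans (Category.assoc _ _ _).symm)⟩⟩
  have hP := Localization.Construction.morphismProperty_eq_top P
    (fun _ _ f b => ⟨f ≫ b, W.Q.map_comp f b⟩)
    (fun _ _ w hw b => by
      obtain ⟨a, rfl⟩ := (hY w hw).2 b
      exact ⟨a, ((Localization.Construction.wIso w hw).inv_hom_id_assoc _).symm.trans
        (congrArg _ (W.Q.map_comp w a).symm)⟩)
  intro φ
  obtain ⟨g, hg⟩ := (hP ▸ trivial : P φ) (𝟙 Y)
  exact ⟨g, hg.trans ((congrArg (φ ≫ ·) (W.Q.map_id Y)).trans (Category.comp_id φ))⟩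

lemma isLocal.Q_map_bijective (hY : W.isLocal Y) (X : 𝒞) :
    Function.Bijective (fun g : X ⟶ Y => W.Q.map g) :=
  ⟨hY.Q_map_injective X, hY.Q_map_surjective X⟩

end CategoryTheory.MorphismProperty

open Opposite

lemma preadditiveYoneda_obj_hom_ext {X : C} {F : Cᵒᵖ ⥤ AddCommGrpCat.{v}}
    {α β : preadditiveYoneda.obj X ⟶ F} (h : α.app (op X) (𝟙 X) = β.app (op X) (𝟙 X)) :
    α = β := by
  ext c u
  have hu : (preadditiveYoneda.obj X).map u.op (𝟙 X) = u := Category.comp_id _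
  have hα := ConcreteCategory.congr_hom (α.naturality u.op) (𝟙 X)
  have hβ := ConcreteCategory.congr_hom (β.naturality u.op) (𝟙 X)
  rw [← hu]
  exact hα.trans ((congrArg (F.map u.op) h).trans hβ.symm)

lemma IsFP.exists_lift {G E : Cᵒᵖ ⥤ AddCommGrpCat.{v}} (hG : IsFP C G) (π : G ⟶ E) [Epi π]
    {X : C} (p : preadditiveYoneda.obj X ⟶ E) :
    ∃ s : preadditiveYoneda.obj X ⟶ G, s ≫ π = p := by
  obtain ⟨Y₁, Y₀, g, c, w, ⟨hc⟩⟩ := hG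
  have : Epi c := epi_of_isColimit_cofork hc
  obtain ⟨u, hu⟩ := (AddCommGrpCat.epi_iff_surjective _).1
    (inferInstance : Epi ((c ≫ π).app (op X))) (p.app (op X) (𝟙 X))
  refine ⟨preadditiveYoneda.map u ≫ c, preadditiveYoneda_obj_hom_ext ?_⟩
  have hid : (preadditiveYoneda.map u).app (op X) (𝟙 X) = u := Category.id_comp u
  change (c ≫ π).app (op X) ((preadditiveYoneda.map u).app (op X) (𝟙 X)) = _
  rw [hid, hu]

lemma IsEff.hom_eq_zero {E : Cᵒᵖ ⥤ AddCommGrpCat.{v}} (hE : IsEff C E) {X : C}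
    (ψ : E ⟶ preadditiveYoneda.obj X) : ψ = 0 := by
  obtain ⟨X₁, X₀, f, hf, p, w, ⟨hc⟩⟩ := hE
  have : Epi p := epi_of_isColimit_cofork hc
  obtain ⟨g, hg⟩ := preadditiveYoneda.map_surjective (p ≫ ψ)
  have hfg : f ≫ g = 0 := preadditiveYoneda.map_injective (by
    rw [preadditiveYoneda_map_zero, Functor.map_comp, hg, ← Category.assoc, w, zero_comp])
  have hg0 : g = 0 := (cancel_epi f).1 (by rw [hfg, comp_zero])
  rw [← cancel_epi p, comp_zero, ← hg, hg0, preadditiveYoneda_map_zero]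

lemma IsEff.of_iso {E E' : Cᵒᵖ ⥤ AddCommGrpCat.{v}} (hE : IsEff C E) (i : E ≅ E') :
    IsEff C E' := by
  obtain ⟨X₁, X₀, f, hf, p, w, ⟨hc⟩⟩ := hE
  exact ⟨X₁, X₀, f, hf, p ≫ i.hom, by rw [← Category.assoc, w, zero_comp],
    ⟨IsColimit.ofIsoColimit hc (Cofork.ext i (by simp))⟩⟩

lemma exists_section_cokernel_π_of_isEff (hewc : EpiIsWeakCokernel (C := C)) {X : C}
    {P : Cᵒᵖ ⥤ AddCommGrpCat.{v}} (i : preadditiveYoneda.obj X ⟶ P) [Mono i]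
    (heff : IsEff C (cokernel i))
    (hlift : ∀ ⦃X₀ : C⦄ (p : preadditiveYoneda.obj X₀ ⟶ cokernel i),
      ∃ s, s ≫ cokernel.π i = p) :
    ∃ e : cokernel i ⟶ P, e ≫ cokernel.π i = 𝟙 _ := by
  obtain ⟨X₁, X₀, f, hf, p, w, ⟨hc⟩⟩ := heff
  have : Epi p := epi_of_isColimit_cofork hc
  obtain ⟨s, hs⟩ := hlift p
  obtain ⟨u, hu⟩ : ∃ u : X₁ ⟶ X, preadditiveYoneda.map u ≫ i = preadditiveYoneda.map f ≫ s := by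
    obtain ⟨u, hu⟩ := preadditiveYoneda.map_surjective
      (Abelian.monoLift i (preadditiveYoneda.map f ≫ s) (by rw [Category.assoc, hs, w]))
    exact ⟨u, hu ▸ Abelian.monoLift_comp _ _ _⟩
  obtain ⟨v, hv⟩ : ∃ v : X₀ ⟶ X, f ≫ v = u := by
    obtain ⟨X₂, g, hgf, hfac⟩ := hewc f hf
    refine hfac u (preadditiveYoneda.map_injective ((cancel_mono i).1 ?_))
    rw [preadditiveYoneda_map_zero, zero_comp, Functor.map_comp, Category.assoc, hu,
      ← Category.assoc, ← Functor.map_comp, hgf, preadditiveYoneda_map_zero, zero_comp]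
  obtain ⟨e, he⟩ := CokernelCofork.IsColimit.desc' hc (s - preadditiveYoneda.map v ≫ i) (by
    rw [Preadditive.comp_sub, ← Category.assoc, ← Functor.map_comp, hv, hu, sub_self])
  have he : p ≫ e = s - preadditiveYoneda.map v ≫ i := he
  refine ⟨e, (cancel_epi p).1 ?_⟩
  rw [← Category.assoc, he, Preadditive.sub_comp, hs, Category.assoc,
    cokernel.condition, comp_zero, sub_zero, Category.comp_id]

lemma exists_extension_of_isEff (hewc : EpiIsWeakCokernel (C := C))
    {I G : Cᵒᵖ ⥤ AddCommGrpCat.{v}} (hG : IsFP C G) (m : I ⟶ G) [Mono m]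
    (heff : IsEff C (cokernel m)) {X : C} (t : I ⟶ preadditiveYoneda.obj X) :
    ∃ ψ : G ⟶ preadditiveYoneda.obj X, m ≫ ψ = t := by
  have hsq := (IsPushout.of_hasPushout t m).flip
  have : IsIso (cokernel.map _ _ _ _ hsq.w) := isIso_cokernel_map_of_isPushout hsq
  have hinl : Mono (pushout.inl t m) := Abelian.mono_pushout_of_mono_g t m
  obtain ⟨e, he⟩ := exists_section_cokernel_π_of_isEff hewc (pushout.inl t m)
    (heff.of_iso (asIso (cokernel.map _ _ _ _ hsq.w))) (fun X₀ p => by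
      obtain ⟨s, hs⟩ := hG.exists_lift (cokernel.π m) (p ≫ inv (cokernel.map _ _ _ _ hsq.w))
      refine ⟨s ≫ pushout.inr t m, ?_⟩
      calc s ≫ pushout.inr t m ≫ cokernel.π _
          = s ≫ cokernel.π m ≫ cokernel.map _ _ _ _ hsq.w := by rw [cokernel.π_desc]
        _ = p := by rw [← Category.assoc, hs, Category.assoc, IsIso.inv_hom_id, Category.comp_id])
  obtain ⟨r, hr⟩ : ∃ r : pushout t m ⟶ preadditiveYoneda.obj X, pushout.inl t m ≫ r = 𝟙 _ :=
    let splitting := ShortComplex.Splitting.ofExactOfSection _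
      (ShortComplex.cokernelSequence_exact (pushout.inl t m)) e he hinl
    ⟨splitting.r, splitting.f_r⟩
  refine ⟨pushout.inr t m ≫ r, ?_⟩
  rw [← Category.assoc, ← pushout.condition, Category.assoc, hr, Category.comp_id]

instance : (yonedaMod C).Full :=
  inferInstanceAs (ObjectProperty.lift _ preadditiveYoneda isFP_preadditiveYoneda).Full

instance : (yonedaMod C).Faithful :=
  inferInstanceAs (ObjectProperty.lift _ preadditiveYoneda isFP_preadditiveYoneda).Faithful

lemma isLocal_effW_yonedaMod_obj (hewc : EpiIsWeakCokernel (C := C)) (X : C) :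
    (effW C).isLocal ((yonedaMod C).obj X) := by
  rintro F G φ ⟨hker, hcok⟩
  dsimp only at hker hcok
  constructor
  · intro g₁ g₂ hg
    have hφ : φ.hom ≫ (g₁.hom - g₂.hom) = 0 := by
      rw [Preadditive.comp_sub, sub_eq_zero]
      exact congrArg InducedCategory.Hom.hom hg
    have hdesc := cokernel.π_desc φ.hom _ hφ
    have hzero : cokernel.desc φ.hom _ hφ = 0 := hcok.hom_eq_zero _
    rw [hzero, comp_zero] at hdesc
    exact InducedCategory.hom_ext (sub_eq_zero.1 hdesc.symm)
  · intro ψ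
    have hcoim : IsEff C (cokernel (Abelian.factorThruCoimage φ.hom)) :=
      hcok.of_iso ((cokernelIsoOfEq (Abelian.coimage.fac φ.hom).symm) ≪≫
        cokernelEpiComp (Abelian.coimage.π φ.hom) (Abelian.factorThruCoimage φ.hom))
    obtain ⟨ψ', hψ'⟩ := exists_extension_of_isEff hewc G.property _ hcoim
      (cokernel.desc (kernel.ι φ.hom) ψ.hom (hker.hom_eq_zero _))
    refine ⟨InducedCategory.homMk ψ', InducedCategory.hom_ext ?_⟩
    change φ.hom ≫ ψ' = ψ.hom
    rw [← Abelian.coimage.fac φ.hom, Category.assoc, hψ']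
    exact cokernel.π_desc _ _ _

theorem localization_hom_bijective_general
    (hewc : EpiIsWeakCokernel (C := C)) :
    (∀ (F : ModCat C) (X : C),
      Function.Bijective
        (fun φ : F ⟶ (yonedaMod C).obj X => (effW C).Q.map φ)) ∧
    (∀ (X X' : C),
      Function.Bijective
        (fun f : X ⟶ X' => ((yonedaMod C) ⋙ (effW C).Q).map f)) := by
  have hQ (F : ModCat C) (X : C) :
      Function.Bijective (fun φ : F ⟶ (yonedaMod C).obj X => (effW C).Q.map φ) :=
    (isLocal_effW_yonedaMod_obj hewc X).Q_map_bijective F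
  exact ⟨hQ, fun X X' => (hQ _ X').comp
    ((Functor.FullyFaithful.ofFullyFaithful (yonedaMod C)).map_bijective X X')⟩

/-- The localization functor `q : mod C ⟶ (mod C)/(eff C)` induces bijections on
morphisms into representable functors; in particular the composite of the Yoneda
embedding with `q` is fully faithful. -/
theorem localization_hom_bijective
    (hwk : _root_.HasWeakKernels (C := C)) (hewc : EpiIsWeakCokernel (C := C)) :
    (∀ (F : ModCat C) (X : C),
      Function.Bijective
        (fun φ : F ⟶ (yonedaMod C).obj X => (effW C).Q.map φ)) ∧
    (∀ (X X' : C),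
      Function.Bijective
        (fun f : X ⟶ X' => ((yonedaMod C) ⋙ (effW C).Q).map f)) :=
  localization_hom_bijective_general hewc
end

section
/- Let X be a full additive subcategory of an abelian category A satisfying: (B1) X is generating; (B2) any object A with Hom(A,X) = 0 for all X ∈ X is zero; (B3) every object admitting a monomorphism into a two-term complex of objects of X (i.e. every A fitting in an exact sequence 0 → A → X₁ → X₀ with X₁, X₀ ∈ X) has a right X-approximation. Then the inclusion X → A sends any sequence X₂ → X₁ → X₀ in X, with X₂ → X₁ a weak kernel in X of X₁ → X₀, to an exact sequence in A. -/
open CategoryTheory CategoryTheory.Limits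

universe w v u

variable {A : Type u} [Category.{v} A] [Abelian A]

/-!
Since `X` is generating, there is an epimorphism `q : x ⟶ kernel g` with `x ∈ X`. The composite
`x ⟶ kernel g ⟶ x₁` is killed by `g`, so the weak kernel property lifts it through `f`; hence `q`
factors through `kernel.lift g f`, which is therefore an epimorphism, i.e. the sequence is exact.
-/

namespace IsWeakKernelIn

variable {X : Set A} {a b c : A} {f : a ⟶ b} {g : b ⟶ c}

theorem epi_kernelLift (hX : Generating X) (hf : IsWeakKernelIn X f g) :
    Epi (kernel.lift g f hf.1) := by
  obtain ⟨x, hx, q, hq⟩ := hX (kernel g)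
  obtain ⟨m, hm⟩ := hf.2 hx (q ≫ kernel.ι g) (by simp)
  have hmq : m ≫ kernel.lift g f hf.1 = q := by
    rw [← cancel_mono (kernel.ι g), Category.assoc, kernel.lift_ι, hm]
  rw [← hmq] at hq
  exact epi_of_epi m _

theorem exact (hX : Generating X) (hf : IsWeakKernelIn X f g) :
    (ShortComplex.mk f g hf.1).Exact :=
  (ShortComplex.exact_iff_epi_kernel_lift _).2 (hf.epi_kernelLift hX)

end IsWeakKernelIn

theorem weakKernel_sequence_exact_general (X : Set A)
    (hB1 : Generating X)
    {x₂ x₁ x₀ : A}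
    (f : x₂ ⟶ x₁) (g : x₁ ⟶ x₀) (hwk : IsWeakKernelIn X f g) :
    ∃ w : f ≫ g = 0, (ShortComplex.mk f g w).Exact :=
  ⟨hwk.1, hwk.exact hB1⟩

/-- Under (B1), (B2), (B3), the inclusion `X ⟶ A` sends weak kernel sequences of `X` to
exact sequences of `A`. -/
theorem weakKernel_sequence_exact (X : Set A)
    (hB1 : Generating X)
    (hB2 : ∀ a : A, (∀ x ∈ X, ∀ φ : a ⟶ x, φ = 0) → IsZero a)
    (hB3 : ∀ a : A,
      (∃ (x₁ : A) (_ : x₁ ∈ X) (x₀ : A) (_ : x₀ ∈ X) (i : a ⟶ x₁) (u : x₁ ⟶ x₀)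
        (w : i ≫ u = 0), Mono i ∧ (ShortComplex.mk i u w).Exact) →
      ∃ (x : A) (g : x ⟶ a), IsRightApprox X g)
    {x₂ x₁ x₀ : A} (h₂ : x₂ ∈ X) (h₁ : x₁ ∈ X) (h₀ : x₀ ∈ X)
    (f : x₂ ⟶ x₁) (g : x₁ ⟶ x₀) (hwk : IsWeakKernelIn X f g) :
    ∃ w : f ≫ g = 0, (ShortComplex.mk f g w).Exact :=
  weakKernel_sequence_exact_general X hB1 f g hwk
end

section
/- Let X be a generating, cogenerating, functorially finite full subcategory of an abelian category A satisfying the condition (2-Rigid): for every epimorphism f₁ : X₁ → X₀ in X there exists a sequence X₃ → X₂ → X₁ → X₀ in X with each map a weak kernel of the next and a weak cokernel of the previous (i.e. f_{i+1} is a weak kernel of f_i and f_i is a weak cokernel of f_{i+1} for i = 1, 2). Then Ext¹_A(X, X') = 0 for all X, X' ∈ X, i.e. every short exact sequence 0 → X' → A → X → 0 in A with X, X' ∈ X splits. -/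
/-!
Take an epic right `X`-approximation `g : Y ⟶ E` and apply (2-Rigid) to the epimorphism
`g ≫ p : Y ⟶ x`, giving `x₃ ⟶ x₂ ⟶ Y`. Since `f₂ ≫ g` lands in `x' = ker p`, it factors as
`q ≫ i`, and `q` kills `f₃`, so the weak cokernel property extends it to `t : Y ⟶ x'`. Then
`t ≫ i` and `g` agree on the weak kernel `f₂` of `g ≫ p`; this forces `t` to vanish on `ker g`
(tested on objects of `X`, which suffices as `X` is generating), so `t` descends along `g` to the
required retraction of `i`.
-/

open CategoryTheory CategoryTheory.Limits

universe w v u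

variable {A : Type u} [Category.{v} A] [Abelian A]

theorem Generating.epi_of_isRightApprox {C : Type*} [Category C] {X : Set C}
    (hgen : Generating X) {y a : C} {g : y ⟶ a} (hg : IsRightApprox X g) : Epi g := by
  obtain ⟨z, hz, e, he⟩ := hgen a
  obtain ⟨k, rfl⟩ := hg.2 hz e
  exact epi_of_epi k g

section

variable {X : Set A}

theorem Generating.eq_zero_of_forall_comp_eq_zero (hgen : Generating X) {a b : A} (h : a ⟶ b)
    (H : ∀ ⦃z : A⦄, z ∈ X → ∀ l : z ⟶ a, l ≫ h = 0) : h = 0 := by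
  obtain ⟨z, hz, e, he⟩ := hgen a
  rw [← cancel_epi e, H hz e, comp_zero]

theorem Generating.exists_comp_eq_of_epi (hgen : Generating X) {y e b : A} (g : y ⟶ e) [Epi g]
    (t : y ⟶ b) (ht : ∀ ⦃z : A⦄, z ∈ X → ∀ l : z ⟶ y, l ≫ g = 0 → l ≫ t = 0) :
    ∃ r : e ⟶ b, g ≫ r = t := by
  have hker : kernel.ι g ≫ t = 0 :=
    hgen.eq_zero_of_forall_comp_eq_zero _ fun z hz l => by
      rw [← Category.assoc, ht hz _ (by simp)]
  exact ⟨Abelian.epiDesc g t hker, Abelian.comp_epiDesc g t hker⟩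

theorem exists_comp_comp_eq_of_isWeakCokernelIn {x' e x y x₂ x₃ : A} {i : x' ⟶ e} {p : e ⟶ x}
    {w : i ≫ p = 0} [Mono i] (hex : (ShortComplex.mk i p w).Exact) (hx' : x' ∈ X)
    {f₂ : x₂ ⟶ y} {f₃ : x₃ ⟶ x₂} (hcok : IsWeakCokernelIn X f₂ f₃) (u : y ⟶ e)
    (hu : f₂ ≫ u ≫ p = 0) : ∃ t : y ⟶ x', f₂ ≫ t ≫ i = f₂ ≫ u := by
  obtain ⟨q, hq⟩ := hex.lift' (f₂ ≫ u) (by rw [Category.assoc, hu])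
  have hf₃q : f₃ ≫ q = 0 := by
    rw [← cancel_mono i, Category.assoc, hq, ← Category.assoc, hcok.1, zero_comp, zero_comp]
  obtain ⟨t, ht⟩ := hcok.2 hx' q hf₃q
  exact ⟨t, by rw [← Category.assoc, ht, hq]⟩

/-- The retraction is the descent of `t` along `g`. -/
theorem Generating.exists_retraction_of_agree_on_isWeakKernelIn (hgen : Generating X)
    {x' e x y x₂ : A} {i : x' ⟶ e} [Mono i] {p : e ⟶ x} (w : i ≫ p = 0) (hx' : x' ∈ X)
    {g : y ⟶ e} [Epi g] (hg : IsRightApprox X g) {f₂ : x₂ ⟶ y}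
    (hker : IsWeakKernelIn X f₂ (g ≫ p)) {t : y ⟶ x'} (ht : f₂ ≫ t ≫ i = f₂ ≫ g) :
    ∃ r : e ⟶ x', i ≫ r = 𝟙 x' := by
  have hdesc : ∀ ⦃z : A⦄, z ∈ X → ∀ l : z ⟶ y, l ≫ g = 0 → l ≫ t = 0 := by
    intro z hz l hl
    obtain ⟨n, rfl⟩ := hker.2 hz l (by rw [← Category.assoc, hl, zero_comp])
    rw [← cancel_mono i, Category.assoc, Category.assoc, ht, ← Category.assoc, hl, zero_comp]
  obtain ⟨r, hr⟩ := hgen.exists_comp_eq_of_epi g t hdesc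
  obtain ⟨j, hj⟩ := hg.2 hx' i
  obtain ⟨m, rfl⟩ := hker.2 hx' j (by rw [← Category.assoc, hj, w])
  refine ⟨r, ?_⟩
  rw [← cancel_mono i, Category.id_comp]
  calc (i ≫ r) ≫ i = m ≫ f₂ ≫ (g ≫ r) ≫ i := by simp only [← hj, Category.assoc]
    _ = i := by rw [hr, ht, ← hj, Category.assoc]

end

theorem ses_splits_of_two_rigid_general (X : Set A)
    (hgen : Generating X) (hff : FunctoriallyFinite X)
    (hrigid : ∀ ⦃x₁ x₀ : A⦄, x₁ ∈ X → x₀ ∈ X → ∀ f₁ : x₁ ⟶ x₀, Epi f₁ →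
      ∃ (x₂ : A) (_ : x₂ ∈ X) (x₃ : A) (_ : x₃ ∈ X) (f₂ : x₂ ⟶ x₁) (f₃ : x₃ ⟶ x₂),
        IsWeakKernelIn X f₂ f₁ ∧ IsWeakCokernelIn X f₁ f₂ ∧
        IsWeakKernelIn X f₃ f₂ ∧ IsWeakCokernelIn X f₂ f₃)
    {x' E x : A} (hx' : x' ∈ X) (hx : x ∈ X)
    (i : x' ⟶ E) (p : E ⟶ x) (w : i ≫ p = 0)
    (hi : Mono i) (hp : Epi p) (hex : (ShortComplex.mk i p w).Exact) :
    ∃ r : E ⟶ x', i ≫ r = 𝟙 x' := by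
  obtain ⟨y, g, hg⟩ := hff.1 E
  have := hgen.epi_of_isRightApprox hg
  obtain ⟨x₂, -, x₃, -, f₂, f₃, hker, -, -, hcok⟩ := hrigid hg.1 hx (g ≫ p) (epi_comp g p)
  obtain ⟨t, ht⟩ := exists_comp_comp_eq_of_isWeakCokernelIn hex hx' hcok g hker.1
  exact hgen.exists_retraction_of_agree_on_isWeakKernelIn w hx' hg hker ht

/-- If `X` is generating, cogenerating, functorially finite and satisfies (2-Rigid),
then every short exact sequence `0 ⟶ X' ⟶ E ⟶ X ⟶ 0` with `X, X' ∈ X` splits,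
i.e. `Ext¹(X, X') = 0` for all `X, X' ∈ X`. -/
theorem ses_splits_of_two_rigid (X : Set A)
    (hgen : Generating X) (hcog : Cogenerating X) (hff : FunctoriallyFinite X)
    (hrigid : ∀ ⦃x₁ x₀ : A⦄, x₁ ∈ X → x₀ ∈ X → ∀ f₁ : x₁ ⟶ x₀, Epi f₁ →
      ∃ (x₂ : A) (_ : x₂ ∈ X) (x₃ : A) (_ : x₃ ∈ X) (f₂ : x₂ ⟶ x₁) (f₃ : x₃ ⟶ x₂),
        IsWeakKernelIn X f₂ f₁ ∧ IsWeakCokernelIn X f₁ f₂ ∧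
        IsWeakKernelIn X f₃ f₂ ∧ IsWeakCokernelIn X f₂ f₃)
    {x' E x : A} (hx' : x' ∈ X) (hx : x ∈ X)
    (i : x' ⟶ E) (p : E ⟶ x) (w : i ≫ p = 0)
    (hi : Mono i) (hp : Epi p) (hex : (ShortComplex.mk i p w).Exact) :
    ∃ r : E ⟶ x', i ≫ r = 𝟙 x' :=
  ses_splits_of_two_rigid_general X hgen hff hrigid hx' hx i p w hi hp hex
end

section
/- Let A be an abelian category and X ⊆ A a generating, cogenerating, functorially finite full additive subcategory closed under direct summands with Ext^i_A(X, X') = 0 for 1 ≤ i ≤ d−1 and X, X' ∈ X. Suppose that for every object A of A there exist exact sequences 0 → A → X_{-1} → ⋯ → X_{-d} → 0 and 0 → X'_d → ⋯ → X'_1 → A → 0 with all X_{-i}, X'_i ∈ X. Then X is d-cluster tilting: X = {A ∈ A : Ext^i_A(A, X) = 0 for 1 ≤ i ≤ d−1, all X ∈ X} = {A ∈ A : Ext^i_A(X, A) = 0 for 1 ≤ i ≤ d−1, all X ∈ X}. -/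
open CategoryTheory CategoryTheory.Limits

universe w v u

variable {A : Type u} [Category.{v} A] [Abelian A]

/-!
Let `a` be Ext-orthogonal to `X` from the left and take an `X`-resolution
`0 → Z_d → ⋯ → Z_1 → a → 0` with syzygies `K_j = ker (Z_{j+1} → Z_j)`. Descending from
`K_{d-1} = 0`, the short exact sequences `0 → K_{j+1} → Z_{j+2} → K_j → 0` shift the
vanishing of `Ext^{j+1}(a, Z_{j+2})` to `Ext^{j+1}(a, K_j) = 0`. At `j = 0` this says that
`Z_1 → a` splits, so `a` is a summand of `Z_1 ∈ X`. The right-orthogonal case is dual, with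
cosyzygies of an `X`-coresolution.
-/

namespace CategoryTheory

open Abelian

namespace ShortComplex

lemma Exact.shortExact_kernel {S : ShortComplex A} (hS : S.Exact) :
    (ShortComplex.mk (kernel.ι S.f) (kernel.lift S.g S.f S.zero)
      (by simp [← cancel_mono (kernel.ι S.g)])).ShortExact where
  exact := by
    let φ : ShortComplex.mk (kernel.ι S.f) (kernel.lift S.g S.f S.zero)
        (by simp [← cancel_mono (kernel.ι S.g)]) ⟶
          ShortComplex.mk (kernel.ι S.f) S.f (by simp) :=
      { τ₁ := 𝟙 _, τ₂ := 𝟙 _, τ₃ := kernel.ι S.g }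
    exact (exact_iff_of_epi_of_isIso_of_mono φ).2 (exact_of_f_is_kernel _ (kernelIsKernel S.f))
  epi_g := (exact_iff_epi_kernel_lift S).1 hS

lemma Exact.shortExact_cokernel {S : ShortComplex A} (hS : S.Exact) :
    (ShortComplex.mk (cokernel.desc S.f S.g S.zero) (cokernel.π S.g)
      (by simp [← cancel_epi (cokernel.π S.f)])).ShortExact where
  exact := by
    let φ : ShortComplex.mk S.g (cokernel.π S.g) (by simp) ⟶
        ShortComplex.mk (cokernel.desc S.f S.g S.zero) (cokernel.π S.g)
          (by simp [← cancel_epi (cokernel.π S.f)]) :=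
      { τ₁ := cokernel.π S.f, τ₂ := 𝟙 _, τ₃ := 𝟙 _ }
    exact (exact_iff_of_epi_of_isIso_of_mono φ).1
      (exact_of_g_is_cokernel _ (cokernelIsCokernel S.g))
  mono_f := (exact_iff_mono_cokernel_desc S).1 hS

lemma shortExact_kernel_of_epi {a b : A} (f : b ⟶ a) [Epi f] :
    (ShortComplex.mk (kernel.ι f) f (kernel.condition f)).ShortExact where
  exact := exact_of_f_is_kernel _ (kernelIsKernel f)

lemma shortExact_cokernel_of_mono {a b : A} (f : a ⟶ b) [Mono f] :
    (ShortComplex.mk f (cokernel.π f) (cokernel.condition f)).ShortExact where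
  exact := exact_of_g_is_cokernel _ (cokernelIsCokernel f)

end ShortComplex

variable [HasExt.{w} A]

lemma Abelian.Ext.subsingleton_of_isZero_right {X Y : A} (hY : IsZero Y) (n : ℕ) :
    Subsingleton (Ext.{w} X Y n) :=
  subsingleton_of_forall_eq 0 fun x ↦ by
    rw [← x.comp_mk₀_id, hY.eq_of_src (𝟙 Y) 0, Ext.mk₀_zero, Ext.comp_zero]

lemma Abelian.Ext.subsingleton_of_isZero_left {X Y : A} (hX : IsZero X) (n : ℕ) :
    Subsingleton (Ext.{w} X Y n) :=
  subsingleton_of_forall_eq 0 fun x ↦ by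
    rw [← x.mk₀_id_comp, hX.eq_of_src (𝟙 X) 0, Ext.mk₀_zero, Ext.zero_comp]

namespace ShortComplex.ShortExact

variable {S : ShortComplex A} (hS : S.ShortExact) {T : A}
include hS

lemma subsingleton_ext_to_X₃ {n : ℕ} (h₂ : Subsingleton (Ext.{w} T S.X₂ n))
    (h₁ : Subsingleton (Ext.{w} T S.X₁ (n + 1))) : Subsingleton (Ext.{w} T S.X₃ n) :=
  subsingleton_of_forall_eq 0 fun z ↦ by
    obtain ⟨x, rfl⟩ := Ext.covariant_sequence_exact₃ T hS z rfl (Subsingleton.elim _ _)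
    rw [Subsingleton.elim x 0, Ext.zero_comp]

lemma subsingleton_ext_from_X₁ {n : ℕ} (h₂ : Subsingleton (Ext.{w} S.X₂ T n))
    (h₃ : Subsingleton (Ext.{w} S.X₃ T (n + 1))) : Subsingleton (Ext.{w} S.X₁ T n) :=
  subsingleton_of_forall_eq 0 fun z ↦ by
    obtain ⟨x, rfl⟩ := Ext.contravariant_sequence_exact₁ hS T z (add_comm 1 n)
      (Subsingleton.elim _ _)
    rw [Subsingleton.elim x 0, Ext.comp_zero]

lemma exists_lift_of_subsingleton_ext (h₁ : Subsingleton (Ext.{w} T S.X₁ 1))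
    (f : T ⟶ S.X₃) : ∃ s : T ⟶ S.X₂, s ≫ S.g = f := by
  obtain ⟨x, hx⟩ := Ext.covariant_sequence_exact₃ T hS (Ext.mk₀ f) rfl
    (Subsingleton.elim _ _)
  obtain ⟨s, rfl⟩ := (Ext.mk₀_bijective _ _).2 x
  exact ⟨s, (Ext.mk₀_bijective _ _).1 (by rwa [Ext.mk₀_comp_mk₀] at hx)⟩

lemma exists_extension_of_subsingleton_ext (h₃ : Subsingleton (Ext.{w} S.X₃ T 1))
    (f : S.X₁ ⟶ T) : ∃ r : S.X₂ ⟶ T, S.f ≫ r = f := by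
  obtain ⟨x, hx⟩ := Ext.contravariant_sequence_exact₁ hS T (Ext.mk₀ f) rfl
    (Subsingleton.elim _ _)
  obtain ⟨r, rfl⟩ := (Ext.mk₀_bijective _ _).2 x
  exact ⟨r, (Ext.mk₀_bijective _ _).1 (by rwa [Ext.mk₀_comp_mk₀] at hx)⟩

end ShortComplex.ShortExact

section Resolution

variable {T : A} {n : ℕ}

lemma subsingleton_ext_kernel_of_resolution (Z : ℕ → A) (h : ∀ i, Z (i + 1) ⟶ Z i)
    [Mono (h n)]
    (hexact : ∀ i, i + 1 ≤ n → ∃ w : h (i + 1) ≫ h i = 0,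
      (ShortComplex.mk (h (i + 1)) (h i) w).Exact)
    (hvan : ∀ i, 1 ≤ i → i ≤ n → Subsingleton (Ext.{w} T (Z (i + 1)) i))
    {j : ℕ} (hj : j ≤ n) : Subsingleton (Ext.{w} T (kernel (h j)) (j + 1)) := by
  induction hj using Nat.decreasingInduction with
  | self => exact Ext.subsingleton_of_isZero_right (isZero_kernel_of_mono _) _
  | of_succ k hk ih =>
    obtain ⟨w, hex⟩ := hexact k hk
    exact hex.shortExact_kernel.subsingleton_ext_to_X₃ (hvan (k + 1) le_add_self hk) ih

lemma exists_lift_of_resolution (Z : ℕ → A) (h : ∀ i, Z (i + 1) ⟶ Z i) [Epi (h 0)]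
    [Mono (h n)]
    (hexact : ∀ i, i + 1 ≤ n → ∃ w : h (i + 1) ≫ h i = 0,
      (ShortComplex.mk (h (i + 1)) (h i) w).Exact)
    (hvan : ∀ i, 1 ≤ i → i ≤ n → Subsingleton (Ext.{w} T (Z (i + 1)) i)) (f : T ⟶ Z 0) :
    ∃ s : T ⟶ Z 1, s ≫ h 0 = f :=
  (ShortComplex.shortExact_kernel_of_epi (h 0)).exists_lift_of_subsingleton_ext
    (subsingleton_ext_kernel_of_resolution Z h hexact hvan (Nat.zero_le n)) f

lemma subsingleton_ext_cokernel_of_coresolution (Y : ℕ → A) (g : ∀ i, Y i ⟶ Y (i + 1))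
    [Epi (g n)]
    (hexact : ∀ i, i + 1 ≤ n → ∃ w : g i ≫ g (i + 1) = 0,
      (ShortComplex.mk (g i) (g (i + 1)) w).Exact)
    (hvan : ∀ i, 1 ≤ i → i ≤ n → Subsingleton (Ext.{w} (Y (i + 1)) T i))
    {j : ℕ} (hj : j ≤ n) : Subsingleton (Ext.{w} (cokernel (g j)) T (j + 1)) := by
  induction hj using Nat.decreasingInduction with
  | self => exact Ext.subsingleton_of_isZero_left (isZero_cokernel_of_epi _) _
  | of_succ k hk ih =>
    obtain ⟨w, hex⟩ := hexact k hk
    exact hex.shortExact_cokernel.subsingleton_ext_from_X₁ (hvan (k + 1) le_add_self hk) ih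

lemma exists_extension_of_coresolution (Y : ℕ → A) (g : ∀ i, Y i ⟶ Y (i + 1)) [Mono (g 0)]
    [Epi (g n)]
    (hexact : ∀ i, i + 1 ≤ n → ∃ w : g i ≫ g (i + 1) = 0,
      (ShortComplex.mk (g i) (g (i + 1)) w).Exact)
    (hvan : ∀ i, 1 ≤ i → i ≤ n → Subsingleton (Ext.{w} (Y (i + 1)) T i)) (f : Y 0 ⟶ T) :
    ∃ r : Y 1 ⟶ T, g 0 ≫ r = f :=
  (ShortComplex.shortExact_cokernel_of_mono (g 0)).exists_extension_of_subsingleton_ext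
    (subsingleton_ext_cokernel_of_coresolution Y g hexact hvan (Nat.zero_le n)) f

end Resolution

end CategoryTheory

theorem d_cluster_tilting_of_resolutions_general [CategoryTheory.HasExt.{w} A]
    (X : Set A) (d : ℕ) (hd : 1 ≤ d)
    (hsum : ∀ ⦃a x : A⦄, x ∈ X → ∀ (i : a ⟶ x) (r : x ⟶ a), i ≫ r = 𝟙 a → a ∈ X)
    (hext : ∀ x ∈ X, ∀ x' ∈ X, ∀ i : ℕ, 1 ≤ i → i ≤ d - 1 →
      Subsingleton (CategoryTheory.Abelian.Ext x x' i))
    (hcores : ∀ a : A,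
      ∃ (Y : ℕ → A) (g : ∀ i, Y i ⟶ Y (i + 1)) (_ : Y 0 = a),
        (∀ i, 1 ≤ i → i ≤ d → Y i ∈ X) ∧ Mono (g 0) ∧ Epi (g (d - 1)) ∧
        ∀ i, i + 2 ≤ d → ∃ w : g i ≫ g (i + 1) = 0,
          (ShortComplex.mk (g i) (g (i + 1)) w).Exact)
    (hres : ∀ a : A,
      ∃ (Z : ℕ → A) (h : ∀ i, Z (i + 1) ⟶ Z i) (_ : Z 0 = a),
        (∀ i, 1 ≤ i → i ≤ d → Z i ∈ X) ∧ Epi (h 0) ∧ Mono (h (d - 1)) ∧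
        ∀ i, i + 2 ≤ d → ∃ w : h (i + 1) ≫ h i = 0,
          (ShortComplex.mk (h (i + 1)) (h i) w).Exact) :
    X = {a : A | ∀ i : ℕ, 1 ≤ i → i ≤ d - 1 → ∀ x ∈ X,
          Subsingleton (CategoryTheory.Abelian.Ext a x i)} ∧
    X = {a : A | ∀ i : ℕ, 1 ≤ i → i ≤ d - 1 → ∀ x ∈ X,
          Subsingleton (CategoryTheory.Abelian.Ext x a i)} := by
  refine ⟨subset_antisymm (fun a ha i h₁ h₂ x hx ↦ hext a ha x hx i h₁ h₂) fun a ha ↦ ?_,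
    subset_antisymm (fun a ha i h₁ h₂ x hx ↦ hext x hx a ha i h₁ h₂) fun a ha ↦ ?_⟩
  · obtain ⟨Z, h, rfl, hZX, hepi, hmono, hexact⟩ := hres a
    obtain ⟨s, hs⟩ := exists_lift_of_resolution Z h (n := d - 1)
      (fun i hi ↦ hexact i (by omega))
      (fun i h₁ h₂ ↦ ha i h₁ h₂ _ (hZX _ (by omega) (by omega))) (𝟙 _)
    exact hsum (hZX 1 le_rfl hd) s (h 0) hs
  · obtain ⟨Y, g, rfl, hYX, hmono, hepi, hexact⟩ := hcores a
    obtain ⟨r, hr⟩ := exists_extension_of_coresolution Y g (n := d - 1)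
      (fun i hi ↦ hexact i (by omega))
      (fun i h₁ h₂ ↦ ha i h₁ h₂ _ (hYX _ (by omega) (by omega))) (𝟙 _)
    exact hsum (hYX 1 le_rfl hd) (g 0) r hr

/-- If `X` is generating, cogenerating, functorially finite, closed under isomorphisms
and direct summands, `(d-1)`-rigid, and every object of `A` admits both a
`d`-coresolution and a `d`-resolution by objects of `X`, then `X` is `d`-cluster
tilting: it coincides with both of its `(d-1)`-fold Ext-perpendicular categories. -/
theorem d_cluster_tilting_of_resolutions [CategoryTheory.HasExt.{w} A]
    (X : Set A) (d : ℕ) (hd : 1 ≤ d)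
    (hiso : ∀ ⦃a b : A⦄, a ∈ X → (a ≅ b) → b ∈ X)
    (hsum : ∀ ⦃a x : A⦄, x ∈ X → ∀ (i : a ⟶ x) (r : x ⟶ a), i ≫ r = 𝟙 a → a ∈ X)
    (hgen : Generating X) (hcog : Cogenerating X) (hff : FunctoriallyFinite X)
    (hext : ∀ x ∈ X, ∀ x' ∈ X, ∀ i : ℕ, 1 ≤ i → i ≤ d - 1 →
      Subsingleton (CategoryTheory.Abelian.Ext x x' i))
    (hcores : ∀ a : A,
      ∃ (Y : ℕ → A) (g : ∀ i, Y i ⟶ Y (i + 1)) (_ : Y 0 = a),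
        (∀ i, 1 ≤ i → i ≤ d → Y i ∈ X) ∧ Mono (g 0) ∧ Epi (g (d - 1)) ∧
        ∀ i, i + 2 ≤ d → ∃ w : g i ≫ g (i + 1) = 0,
          (ShortComplex.mk (g i) (g (i + 1)) w).Exact)
    (hres : ∀ a : A,
      ∃ (Z : ℕ → A) (h : ∀ i, Z (i + 1) ⟶ Z i) (_ : Z 0 = a),
        (∀ i, 1 ≤ i → i ≤ d → Z i ∈ X) ∧ Epi (h 0) ∧ Mono (h (d - 1)) ∧
        ∀ i, i + 2 ≤ d → ∃ w : h (i + 1) ≫ h i = 0,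
          (ShortComplex.mk (h (i + 1)) (h i) w).Exact) :
    X = {a : A | ∀ i : ℕ, 1 ≤ i → i ≤ d - 1 → ∀ x ∈ X,
          Subsingleton (CategoryTheory.Abelian.Ext a x i)} ∧
    X = {a : A | ∀ i : ℕ, 1 ≤ i → i ≤ d - 1 → ∀ x ∈ X,
          Subsingleton (CategoryTheory.Abelian.Ext x a i)} :=
  d_cluster_tilting_of_resolutions_general X d hd hsum hext hcores hres
end
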